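/- Let n ∈ ℤ_{≥0}^r and 1 ≤ k ≤ r. The index n + e_k is normal if and only if ⟨Φ, z^{n_k}⟩_k ≠ 0 for every type II multiple orthogonal polynomial Φ for the index n. -/

import Mathlib

open MeasureTheory Polynomial

noncomputable section

/-- A system of measures on the unit circle: each `μ j` is a probability measure,
carried by the unit circle `∂𝔻 = {z : |z| = 1}`, with infinite support. -/
def MopucSystem {r : ℕ} (μ : Fin r → Measure ℂ) : Prop :=
  ∀ j, IsProbabilityMeasure (μ j) ∧ μ j ((Metric.sphere (0 : ℂ) 1)ᶜ) = 0 ∧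
    ∀ s : Set ℂ, s.Finite → μ j (sᶜ) ≠ 0

/-- The inner product `⟨P, Q⟩_μ = ∫ P(z)·conj (Q(z)) dμ(z)`. -/
def pip (μ : Measure ℂ) (P Q : Polynomial ℂ) : ℂ :=
  ∫ z, P.eval z * (starRingEnd ℂ) (Q.eval z) ∂μ

/-- `⟨P, z^p⟩_μ`. -/
def mip (μ : Measure ℂ) (P : Polynomial ℂ) (p : ℕ) : ℂ :=
  pip μ P (X ^ p)

/-- The moment `ν^p = ∫ z^p dμ(z)` for `p ∈ ℤ` (on the circle `z^{-m} = conj (z^m)`). -/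
def mom (μ : Measure ℂ) (p : ℤ) : ℂ :=
  ∫ z, z ^ p ∂μ

/-- The linear position of the pair `(j, q)` (with `q < n j`): `(∑_{i<j} n i) + q`.
This enumerates the pairs, in lexicographic order, by `0, 1, …, |n| − 1`. -/
def linIdx {r : ℕ} (n : Fin r → ℕ) (c : (j : Fin r) × Fin (n j)) : ℕ :=
  (∑ i ∈ Finset.univ.filter (fun i => i < c.1), n i) + (c.2 : ℕ)

/-- The moment matrix `M_n`: rows are indexed by pairs `(j, q)` with `1 ≤ j ≤ r`,
`0 ≤ q ≤ n j − 1`, columns by `p = 0, …, |n| − 1` (realized as pairs via the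
order-preserving enumeration `linIdx`), and the entry at `((j,q), p)` is `ν_j^{p−q}`. -/
def Mmat {r : ℕ} (μ : Fin r → Measure ℂ) (n : Fin r → ℕ) :
    Matrix ((j : Fin r) × Fin (n j)) ((j : Fin r) × Fin (n j)) ℂ :=
  Matrix.of fun rq c => mom (μ rq.1) ((linIdx n c : ℤ) - ((rq.2 : ℕ) : ℤ))

/-- The index `n` is normal if `det M_n ≠ 0`.  (For `n = 0` the matrix is empty and its
determinant is `1`, so `n = 0` is normal, matching the convention of the paper.) -/
def NormalIndex {r : ℕ} (μ : Fin r → Measure ℂ) (n : Fin r → ℕ) : Prop :=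
  (Mmat μ n).det ≠ 0

/-- A type II multiple orthogonal polynomial for the multi-index `n`. -/
def IsTypeII {r : ℕ} (μ : Fin r → Measure ℂ) (n : Fin r → ℕ) (P : Polynomial ℂ) : Prop :=
  P ≠ 0 ∧ P.degree ≤ ((∑ j, n j : ℕ) : WithBot ℕ) ∧
    ∀ j, ∀ p : ℕ, p < n j → mip (μ j) P p = 0

/-- A type II* multiple orthogonal polynomial for the multi-index `n`. -/
def IsTypeIIStar {r : ℕ} (μ : Fin r → Measure ℂ) (n : Fin r → ℕ) (P : Polynomial ℂ) : Prop :=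
  P ≠ 0 ∧ P.degree ≤ ((∑ j, n j : ℕ) : WithBot ℕ) ∧
    ∀ j, ∀ p : ℕ, 1 ≤ p → p ≤ n j → mip (μ j) P p = 0

/-- A type I multiple orthogonal polynomial for the multi-index `n`:
a nonzero vector of polynomials with `deg (L j) ≤ n j − 1` (so `L j = 0` when `n j = 0`),
and `∑_j ⟨L j, z^p⟩_j = 0` for `p = 0, …, |n| − 2`. -/
def IsTypeI {r : ℕ} (μ : Fin r → Measure ℂ) (n : Fin r → ℕ) (L : Fin r → Polynomial ℂ) : Prop :=
  L ≠ 0 ∧ (∀ j, (L j).degree < ((n j : ℕ) : WithBot ℕ)) ∧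
    ∀ p : ℕ, p + 2 ≤ ∑ j, n j → ∑ j, mip (μ j) (L j) p = 0

/-- A type I* multiple orthogonal polynomial for the multi-index `n`:
a nonzero vector of polynomials with `deg (L j) ≤ n j − 1`,
and `∑_j ⟨L j, z^p⟩_j = 0` for `p = 1, …, |n| − 1`. -/
def IsTypeIStar {r : ℕ} (μ : Fin r → Measure ℂ) (n : Fin r → ℕ) (L : Fin r → Polynomial ℂ) : Prop :=
  L ≠ 0 ∧ (∀ j, (L j).degree < ((n j : ℕ) : WithBot ℕ)) ∧
    ∀ p : ℕ, 1 ≤ p → p + 1 ≤ ∑ j, n j → ∑ j, mip (μ j) (L j) p = 0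

/-- `Φ_n`: the monic type II polynomial of degree exactly `|n|`. -/
def IsPhi {r : ℕ} (μ : Fin r → Measure ℂ) (n : Fin r → ℕ) (P : Polynomial ℂ) : Prop :=
  IsTypeII μ n P ∧ P.Monic ∧ P.natDegree = ∑ j, n j

/-- `Φ*_n`: the type II* polynomial with `Φ*_n(0) = 1`. -/
def IsPhiStar {r : ℕ} (μ : Fin r → Measure ℂ) (n : Fin r → ℕ) (P : Polynomial ℂ) : Prop :=
  IsTypeIIStar μ n P ∧ P.eval 0 = 1

/-- `Λ_n`: the type I vector normalized by `∑_j ⟨Λ_{n,j}, z^{|n|−1}⟩_j = 1`. -/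
def IsLambda {r : ℕ} (μ : Fin r → Measure ℂ) (n : Fin r → ℕ) (L : Fin r → Polynomial ℂ) : Prop :=
  IsTypeI μ n L ∧ ∑ j, mip (μ j) (L j) ((∑ i, n i) - 1) = 1

/-- `Λ*_n`: the type I* vector normalized by `∑_j ⟨Λ*_{n,j}, 1⟩_j = 1`. -/
def IsLambdaStar {r : ℕ} (μ : Fin r → Measure ℂ) (n : Fin r → ℕ) (L : Fin r → Polynomial ℂ) : Prop :=
  IsTypeIStar μ n L ∧ ∑ j, mip (μ j) (L j) 0 = 1

/-- The multi-index `n + e_k`. -/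
def eAdd {r : ℕ} (n : Fin r → ℕ) (k : Fin r) : Fin r → ℕ :=
  Function.update n k (n k + 1)

/-- The multi-index `n − e_k` (used only when `n k ≥ 1`). -/
def eSub {r : ℕ} (n : Fin r → ℕ) (k : Fin r) : Fin r → ℕ :=
  Function.update n k (n k - 1)

/-! ### Auxiliary lemmas -/

section Aux

variable {μ0 : Measure ℂ} [IsProbabilityMeasure μ0]
  (hs : μ0 ((Metric.sphere (0 : ℂ) 1)ᶜ) = 0)

include hs

lemma ae_sphere' : ∀ᵐ z ∂μ0, z ∈ Metric.sphere (0 : ℂ) 1 := by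
  rw [MeasureTheory.ae_iff]
  exact hs

lemma integrable_mono' (p q : ℕ) :
    Integrable (fun z : ℂ => z ^ p * (starRingEnd ℂ) z ^ q) μ0 := by
  apply (integrable_const (1 : ℝ)).mono'
  · exact (Continuous.mul (continuous_pow p)
      ((Complex.continuous_conj).pow q)).aestronglyMeasurable
  · filter_upwards [ae_sphere' hs] with z hz
    rw [mem_sphere_zero_iff_norm] at hz
    simp [norm_pow, hz]

lemma integral_mono_eq (p q : ℕ) :
    ∫ z, z ^ p * (starRingEnd ℂ) z ^ q ∂μ0 = mom μ0 ((p : ℤ) - q) := by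
  apply integral_congr_ae
  filter_upwards [ae_sphere' hs] with z hz
  rw [mem_sphere_zero_iff_norm] at hz
  have hz0 : z ≠ 0 := by
    intro h; rw [h] at hz; simp at hz
  have hconj : (starRingEnd ℂ) z = z⁻¹ := by
    apply eq_inv_of_mul_eq_one_left
    rw [mul_comm, Complex.mul_conj]
    norm_cast
    rw [Complex.normSq_eq_norm_sq, hz]; norm_num
  rw [hconj, inv_pow, ← zpow_natCast z p, ← zpow_natCast z q, ← zpow_neg,
    ← zpow_add₀ hz0]
  ring_nf

lemma mip_eq_sum {P : Polynomial ℂ} {N : ℕ} (hP : P.natDegree ≤ N) (q : ℕ) :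
    mip μ0 P q = ∑ p ∈ Finset.range (N + 1), P.coeff p * mom μ0 ((p : ℤ) - q) := by
  unfold mip pip
  have h1 : ∀ z : ℂ, P.eval z * (starRingEnd ℂ) ((X ^ q : Polynomial ℂ).eval z)
      = ∑ p ∈ Finset.range (N + 1), P.coeff p * (z ^ p * (starRingEnd ℂ) z ^ q) := by
    intro z
    rw [eval_pow, eval_X, map_pow, eval_eq_sum_range' (Nat.lt_succ_of_le hP), Finset.sum_mul]
    exact Finset.sum_congr rfl fun p _ => by ring
  simp_rw [h1]
  rw [integral_finset_sum _ (fun p _ => ((integrable_mono' hs p q).const_mul _))]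
  exact Finset.sum_congr rfl fun p _ => by
    rw [MeasureTheory.integral_const_mul, integral_mono_eq hs]

end Aux

lemma linIdx_lt {r : ℕ} (n : Fin r → ℕ) (c : (j : Fin r) × Fin (n j)) :
    linIdx n c < ∑ j, n j := by
  obtain ⟨j, q⟩ := c
  have h1 : (∑ i ∈ Finset.univ.filter (fun i => i < j), n i) + n j
      ≤ ∑ i, n i := by
    rw [add_comm, ← Finset.sum_insert (by simp)]
    exact Finset.sum_le_sum_of_subset (Finset.subset_univ _)
  have := q.isLt
  simp only [linIdx]
  omega

lemma linIdx_inj {r : ℕ} (n : Fin r → ℕ) : Function.Injective (linIdx n) := by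
  have key : ∀ c d : (j : Fin r) × Fin (n j), c.1 < d.1 → linIdx n c < linIdx n d := by
    rintro ⟨j, q⟩ ⟨j', q'⟩ (h : j < j')
    have hsub : insert j (Finset.univ.filter (fun i => i < j))
        ⊆ Finset.univ.filter (fun i => i < j') := by
      intro i hi
      simp only [Finset.mem_insert, Finset.mem_filter, Finset.mem_univ, true_and] at *
      rcases hi with rfl | hi
      · exact h
      · exact hi.trans h
    have h2 : (∑ i ∈ Finset.univ.filter (fun i => i < j), n i) + n j
        ≤ ∑ i ∈ Finset.univ.filter (fun i => i < j'), n i := by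
      rw [add_comm, ← Finset.sum_insert (by simp)]
      exact Finset.sum_le_sum_of_subset hsub
    have := q.isLt
    simp only [linIdx]
    omega
  rintro ⟨j, q⟩ ⟨j', q'⟩ h
  rcases lt_trichotomy j j' with hlt | rfl | hlt
  · exact absurd h (key ⟨j, q⟩ ⟨j', q'⟩ hlt).ne
  · simp only [linIdx, add_right_cancel_iff] at h
    have : q = q' := Fin.ext (by omega)
    subst this; rfl
  · exact absurd h.symm (key ⟨j', q'⟩ ⟨j, q⟩ hlt).ne

lemma linIdx_image {r : ℕ} (n : Fin r → ℕ) :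
    Finset.univ.image (linIdx n) = Finset.range (∑ j, n j) := by
  apply Finset.eq_of_subset_of_card_le
  · intro p hp
    simp only [Finset.mem_image] at hp
    obtain ⟨c, _, rfl⟩ := hp
    exact Finset.mem_range.mpr (linIdx_lt n c)
  · rw [Finset.card_range, Finset.card_image_of_injective _ (linIdx_inj n)]
    simp [Finset.card_univ]

lemma sum_range_eq {r : ℕ} (n : Fin r → ℕ) (f : ℕ → ℂ) :
    ∑ p ∈ Finset.range (∑ j, n j), f p = ∑ c : (j : Fin r) × Fin (n j), f (linIdx n c) := by
  rw [← linIdx_image n, Finset.sum_image fun x _ y _ h => linIdx_inj n h]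

lemma linIdx_surj {r : ℕ} (n : Fin r → ℕ) {p : ℕ} (hp : p < ∑ j, n j) :
    ∃ c, linIdx n c = p := by
  have : p ∈ Finset.univ.image (linIdx n) := by
    rw [linIdx_image]; exact Finset.mem_range.mpr hp
  simpa using this

/-- `n + e_k` is normal iff `⟨Φ, z^{n_k}⟩_k ≠ 0` for every type II MOP `Φ`
for the index `n`. -/
theorem normality_step_up (r : ℕ) (hr : 0 < r) (μ : Fin r → Measure ℂ) (hμ : MopucSystem μ)
    (n : Fin r → ℕ) (k : Fin r) :
    NormalIndex μ (eAdd n k) ↔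
      ∀ P : Polynomial ℂ, IsTypeII μ n P → mip (μ k) P (n k) ≠ 0 := by
  classical
  set m := eAdd n k with hm
  have hmk : m k = n k + 1 := Function.update_self k _ n
  have hmj : ∀ j, n j ≤ m j := by
    intro j
    by_cases h : j = k
    · subst h; rw [hmk]; omega
    · exact (Function.update_of_ne h (n k + 1) n).ge
  have hsum : ∑ j, m j = (∑ j, n j) + 1 := by
    have h1 := Finset.sum_update_of_mem (Finset.mem_univ k) n (n k + 1)
    have h2 := Finset.add_sum_erase Finset.univ n (Finset.mem_univ k)
    rw [Finset.sdiff_singleton_eq_erase] at h1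
    show ∑ j, Function.update n k (n k + 1) j = _
    omega
  -- the key computation: `M_{n+e_k} ⬝ (coeffs of P)` at row `(j,q)` is `⟨P, z^q⟩_j`
  have key : ∀ P : Polynomial ℂ, P.natDegree ≤ ∑ j, n j →
      ∀ c : (j : Fin r) × Fin (m j),
      (Mmat μ m).mulVec (fun d => P.coeff (linIdx m d)) c = mip (μ c.1) P (c.2 : ℕ) := by
    intro P hP c
    haveI := (hμ c.1).1
    have h0 : (Mmat μ m).mulVec (fun d => P.coeff (linIdx m d)) c
        = ∑ d : (j : Fin r) × Fin (m j),
            mom (μ c.1) ((linIdx m d : ℤ) - ((c.2 : ℕ) : ℤ)) * P.coeff (linIdx m d) := rfl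
    rw [h0, ← sum_range_eq m (fun p => mom (μ c.1) ((p : ℤ) - ((c.2 : ℕ) : ℤ)) * P.coeff p),
      hsum, mip_eq_sum (hμ c.1).2.1 hP (c.2 : ℕ)]
    exact Finset.sum_congr rfl fun p _ => by ring
  constructor
  · -- normal ⇒ pairing nonzero
    intro hdet P hP h0
    obtain ⟨hP0, hPdeg, hPorth⟩ := hP
    have hnat : P.natDegree ≤ ∑ j, n j := Polynomial.natDegree_le_iff_degree_le.mpr hPdeg
    have hker : (Mmat μ m).mulVec (fun d => P.coeff (linIdx m d)) = 0 := by
      funext c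
      rw [key P hnat c]
      obtain ⟨j, q⟩ := c
      by_cases hj : j = k
      · subst hj
        rcases Nat.lt_or_ge (q : ℕ) (n j) with h | h
        · exact hPorth j _ h
        · have hq : (q : ℕ) = n j := by
            have h2 : (q : ℕ) < n j + 1 := lt_of_lt_of_le q.isLt hmk.le
            omega
          rw [Pi.zero_apply, hq]
          exact h0
      · have hmj' : m j = n j := by
          rw [hm]; exact Function.update_of_ne hj (n k + 1) n
        exact hPorth j q (lt_of_lt_of_le q.isLt hmj'.le)
    have hv : (fun d => P.coeff (linIdx m d)) = 0 := by
      by_contra hv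
      exact hdet (Matrix.exists_mulVec_eq_zero_iff.mp ⟨_, hv, hker⟩)
    apply hP0
    refine Polynomial.ext fun p => ?_
    rw [Polynomial.coeff_zero]
    by_cases hp : p < ∑ j, m j
    · obtain ⟨c, rfl⟩ := linIdx_surj m hp
      simpa using congrFun hv c
    · exact Polynomial.coeff_eq_zero_of_natDegree_lt (by omega)
  · -- pairing nonzero for all type II ⇒ normal
    intro H hdet
    obtain ⟨v, hv0, hker⟩ := Matrix.exists_mulVec_eq_zero_iff.mpr hdet
    set P : Polynomial ℂ :=
      ∑ d : (j : Fin r) × Fin (m j), Polynomial.monomial (linIdx m d) (v d) with hPdef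
    have hcoeff : ∀ d, P.coeff (linIdx m d) = v d := by
      intro d
      rw [hPdef, Polynomial.finset_sum_coeff]
      have h1 : ∀ e ∈ Finset.univ, ((Polynomial.monomial (linIdx m e)) (v e)).coeff (linIdx m d)
          = if e = d then v e else 0 := by
        intro e _
        rw [Polynomial.coeff_monomial]
        congr 1
        exact propext (linIdx_inj m).eq_iff
      rw [Finset.sum_congr rfl h1, Finset.sum_ite_eq' Finset.univ d v]
      simp
    have hdeg : P.degree ≤ ((∑ j, n j : ℕ) : WithBot ℕ) := by
      rw [hPdef]
      refine (Polynomial.degree_sum_le _ _).trans ?_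
      refine Finset.sup_le fun d _ => ?_
      refine (Polynomial.degree_monomial_le _ _).trans ?_
      have : linIdx m d ≤ ∑ j, n j := by
        have := linIdx_lt m d; omega
      exact_mod_cast this
    have hnat : P.natDegree ≤ ∑ j, n j := Polynomial.natDegree_le_iff_degree_le.mpr hdeg
    have hPne : P ≠ 0 := by
      obtain ⟨d, hd⟩ := Function.ne_iff.mp hv0
      intro h
      apply hd
      rw [← hcoeff d, h, Polynomial.coeff_zero, Pi.zero_apply]
    have hveq : (fun d => P.coeff (linIdx m d)) = v := funext hcoeff
    have hrow : ∀ c : (j : Fin r) × Fin (m j), mip (μ c.1) P (c.2 : ℕ) = 0 := by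
      intro c
      rw [← key P hnat c, hveq, hker, Pi.zero_apply]
    have horth : ∀ j, ∀ p : ℕ, p < n j → mip (μ j) P p = 0 := by
      intro j p hp
      exact hrow ⟨j, ⟨p, lt_of_lt_of_le hp (hmj j)⟩⟩
    have hmip0 : mip (μ k) P (n k) = 0 := hrow ⟨k, ⟨n k, by rw [hmk]; omega⟩⟩
    exact H P ⟨hPne, hdeg, horth⟩ hmip0
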